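/- arXiv:1004.0944 — 3 statements merged into one kernel-verified Lean document; each statement's English description precedes it below -/
import Mathlib

section
/- (Podelski–Rybalchenko soundness) Let A, A' ∈ ℚ^{m×n} and b ∈ ℚ^m describe a loop by the constraint A x + A' x' ≤ b. If there exist nonnegative rational vectors λ₁, λ₂ ∈ ℚ₊^m satisfying λ₁ᵀ A' = 0, (λ₁ᵀ − λ₂ᵀ) A = 0, λ₂ᵀ (A + A') = 0, and λ₂ᵀ b < 0, then the function f(x) = λ₂ᵀ A' x satisfies, for all x, x' with A x + A' x' ≤ b: f(x) − f(x') ≥ −λ₂ᵀ b > 0 and f(x) ≥ −λ₁ᵀ b, i.e., f is a ranking function bounded below and decreasing by a fixed positive amount; consequently the loop terminates (no infinite transition sequence exists). -/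
/-!
Multiplying the constraint `A x + A' x' ≤ b` by a nonnegative row vector preserves it. With `λ₂`,
the equation `λ₂ᵀ A = -λ₂ᵀ A'` turns it into `f x' - f x ≤ λ₂ᵀ b`; with `λ₁`, the equations
`λ₁ᵀ A' = 0` and `λ₁ᵀ A = λ₂ᵀ A` turn it into `-f x ≤ λ₁ᵀ b`. A quantity that drops by a fixed
positive amount at every step yet stays bounded below cannot do so forever in an archimedean
order, so the loop terminates.
-/

open Matrix

theorem not_exists_chain_of_ranking {X α : Type*} [AddCommGroup α] [LinearOrder α]
    [IsOrderedAddMonoid α] [Archimedean α] (T : X → X → Prop) (f : X → α) {c δ : α}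
    (hδ : 0 < δ) (hdec : ∀ x x', T x x' → δ ≤ f x - f x')
    (hbdd : ∀ x x', T x x' → c ≤ f x) :
    ¬ ∃ seq : ℕ → X, ∀ k, T (seq k) (seq (k + 1)) := by
  rintro ⟨seq, hseq⟩
  have hdrop : ∀ k : ℕ, f (seq k) + k • δ ≤ f (seq 0) := by
    intro k
    induction k with
    | zero => simp
    | succ k ih =>
      calc f (seq (k + 1)) + (k + 1) • δ = (f (seq (k + 1)) + δ) + k • δ := by
            rw [succ_nsmul]; abel
        _ ≤ f (seq k) + k • δ := by gcongr; exact le_sub_iff_add_le'.mp (hdec _ _ (hseq k))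
        _ ≤ f (seq 0) := ih
  obtain ⟨k, hk⟩ := Archimedean.arch (f (seq 0) - c + δ) hδ
  have hk' : k • δ ≤ f (seq 0) - c := by
    rw [le_sub_iff_add_le']
    calc c + k • δ ≤ f (seq k) + k • δ := by gcongr; exact hbdd _ _ (hseq k)
      _ ≤ f (seq 0) := hdrop k
  exact (add_le_iff_nonpos_right _).mp (hk.trans hk') |>.not_gt hδ

section PodelskiRybalchenko

variable {R ι κ : Type*} [CommRing R] [LinearOrder R] [IsStrictOrderedRing R]
  [Fintype ι] [Fintype κ] {A A' : Matrix ι κ R} {b l : ι → R} {x x' : κ → R}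

theorem vecMul_dotProduct_add_le (hl : 0 ≤ l) (hT : A *ᵥ x + A' *ᵥ x' ≤ b) :
    vecMul l A ⬝ᵥ x + vecMul l A' ⬝ᵥ x' ≤ l ⬝ᵥ b := by
  simpa only [dotProduct_add, dotProduct_mulVec] using
    dotProduct_le_dotProduct_of_nonneg_left hT hl

theorem neg_dotProduct_le_sub_of_vecMul_add_eq_zero (hl : 0 ≤ l) (h : vecMul l (A + A') = 0)
    (hT : A *ᵥ x + A' *ᵥ x' ≤ b) :
    -(l ⬝ᵥ b) ≤ l ⬝ᵥ (A' *ᵥ x) - l ⬝ᵥ (A' *ᵥ x') := by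
  have hA : vecMul l A = -vecMul l A' := eq_neg_of_add_eq_zero_left (by rw [← vecMul_add, h])
  have := vecMul_dotProduct_add_le hl hT
  rw [hA, neg_dotProduct] at this
  rw [dotProduct_mulVec, dotProduct_mulVec]
  linarith

theorem neg_dotProduct_le_of_vecMul_eq_zero {l₂ : ι → R} (hl : 0 ≤ l) (h1 : vecMul l A' = 0)
    (h2 : vecMul (l - l₂) A = 0) (h3 : vecMul l₂ (A + A') = 0)
    (hT : A *ᵥ x + A' *ᵥ x' ≤ b) :
    -(l ⬝ᵥ b) ≤ l₂ ⬝ᵥ (A' *ᵥ x) := by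
  have hA : vecMul l A = -vecMul l₂ A' := by
    have hl₁₂ : vecMul l A = vecMul l₂ A := sub_eq_zero.mp (by rwa [← sub_vecMul])
    rw [hl₁₂]
    exact eq_neg_of_add_eq_zero_left (by rw [← vecMul_add, h3])
  have := vecMul_dotProduct_add_le hl hT
  rw [hA, h1, neg_dotProduct, zero_dotProduct] at this
  rw [dotProduct_mulVec]
  linarith

end PodelskiRybalchenko

/-- Podelski–Rybalchenko soundness: if nonnegative `λ₁, λ₂` satisfy the PR conditions
for the loop `A x + A' x' ≤ b`, then `f x = λ₂ᵀ A' x` is a ranking function bounded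
below and decreasing by the fixed positive amount `−λ₂ᵀb`; hence the loop terminates. -/
theorem stmt_7 {m n : ℕ} (A A' : Matrix (Fin m) (Fin n) ℚ) (b : Fin m → ℚ)
    (l₁ l₂ : Fin m → ℚ) (hl₁ : ∀ i, 0 ≤ l₁ i) (hl₂ : ∀ i, 0 ≤ l₂ i)
    (h1 : vecMul l₁ A' = 0)
    (h2 : vecMul (l₁ - l₂) A = 0)
    (h3 : vecMul l₂ (A + A') = 0)
    (h4 : l₂ ⬝ᵥ b < 0) :
    (0 < -(l₂ ⬝ᵥ b)) ∧
    (∀ x x' : Fin n → ℚ, A *ᵥ x + A' *ᵥ x' ≤ b →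
      (l₂ ⬝ᵥ (A' *ᵥ x)) - (l₂ ⬝ᵥ (A' *ᵥ x')) ≥ -(l₂ ⬝ᵥ b) ∧
      (l₂ ⬝ᵥ (A' *ᵥ x)) ≥ -(l₁ ⬝ᵥ b)) ∧
    ¬ ∃ seq : ℕ → (Fin n → ℚ), ∀ k : ℕ, A *ᵥ seq k + A' *ᵥ seq (k + 1) ≤ b := by
  have hranking : ∀ x x' : Fin n → ℚ, A *ᵥ x + A' *ᵥ x' ≤ b →
      (l₂ ⬝ᵥ (A' *ᵥ x)) - (l₂ ⬝ᵥ (A' *ᵥ x')) ≥ -(l₂ ⬝ᵥ b) ∧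
      (l₂ ⬝ᵥ (A' *ᵥ x)) ≥ -(l₁ ⬝ᵥ b) := fun x x' hT =>
    ⟨neg_dotProduct_le_sub_of_vecMul_add_eq_zero hl₂ h3 hT,
      neg_dotProduct_le_of_vecMul_eq_zero hl₁ h1 h2 h3 hT⟩
  exact ⟨neg_pos.mpr h4, hranking,
    not_exists_chain_of_ranking (fun x x' => A *ᵥ x + A' *ᵥ x' ≤ b)
      (fun x => l₂ ⬝ᵥ (A' *ᵥ x)) (neg_pos.mpr h4)
      (fun x x' hT => (hranking x x' hT).1) (fun x x' hT => (hranking x x' hT).2)⟩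
end

section
/- (Affine Farkas lemma) Let P = {x ∈ ℚⁿ : C x + d ≥ 0} be a nonempty polyhedron. An affine function f(x) = cᵀx + c₀ is nonnegative at every point of P if and only if there exist λ₀ ≥ 0 and a nonnegative vector λ such that f(x) = λ₀ + λᵀ(C x + d) for all x (i.e., cᵀ = λᵀC and c₀ = λ₀ + λᵀd). -/
/-!
Homogenize: `f ≥ 0` on `P` says that `(c, c₀)` is nonnegative on the cone
`{(x, t) : C x + t d ≥ 0, t ≥ 0}`, since a point with `t > 0` rescales into `P` and one with
`t = 0` is a recession direction of the nonempty `P`, along which `f` would otherwise become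
negative. By the conic Farkas lemma `(c, c₀)` is then a nonnegative combination of the rows of
`[C d; 0 1]`, and the coefficient of the last row is `λ₀`.

The conic Farkas lemma over an ordered field is proved by induction on the number of generators
(Fourier–Motzkin elimination): if `x` separates `b` from all generators but the last one `u`,
and `u ⬝ᵥ x < 0`, project everything along `u` into the hyperplane `x⊥` and separate there.
-/

open Matrix

def IsConicCombination {𝕜 ι σ : Type*} [Semiring 𝕜] [PartialOrder 𝕜] [Fintype ι]
    (a : ι → σ → 𝕜) (b : σ → 𝕜) : Prop :=
  ∃ l : ι → 𝕜, 0 ≤ l ∧ ∑ i, l i • a i = b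

section ConicCombination

variable {𝕜 σ : Type*} [Semiring 𝕜] [PartialOrder 𝕜]

theorem IsConicCombination.add_smul_last {m : ℕ} {a : Fin (m + 1) → σ → 𝕜} {w : σ → 𝕜}
    (hw : IsConicCombination (Fin.init a) w) {μ : 𝕜} (hμ : 0 ≤ μ) :
    IsConicCombination a (w + μ • a (Fin.last m)) := by
  obtain ⟨l, hl, rfl⟩ := hw
  refine ⟨Fin.snoc l μ, Fin.lastCases (by simpa) fun i => by simpa using hl i, ?_⟩
  simp [Fin.sum_univ_castSucc, Fin.init]

theorem IsConicCombination.comp_equiv {ι ι' : Type*} [Fintype ι] [Fintype ι']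
    {a : ι → σ → 𝕜} {b : σ → 𝕜} (e : ι' ≃ ι) (h : IsConicCombination a b) :
    IsConicCombination (a ∘ e) b := by
  obtain ⟨l, hl, rfl⟩ := h
  exact ⟨l ∘ e, fun i => hl (e i), e.sum_comp fun i => l i • a i⟩

end ConicCombination

section Elimination

variable {𝕜 σ : Type*} [Fintype σ]

/-- The projection along `u` onto `x⊥`, scaled by `-(u ⬝ᵥ x)` to avoid dividing. -/
def elimAlong [CommRing 𝕜] (u x : σ → 𝕜) : (σ → 𝕜) →ₗ[𝕜] σ → 𝕜 where
  toFun v := (v ⬝ᵥ x) • u - (u ⬝ᵥ x) • v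
  map_add' v w := by simp only [add_dotProduct]; module
  map_smul' r v := by simp only [smul_dotProduct, smul_eq_mul, RingHom.id_apply]; module

section CommRing

variable [CommRing 𝕜]

theorem elimAlong_apply (u x v : σ → 𝕜) : elimAlong u x v = (v ⬝ᵥ x) • u - (u ⬝ᵥ x) • v :=
  rfl

theorem elimAlong_self (u x : σ → 𝕜) : elimAlong u x u = 0 := by
  simp [elimAlong_apply]

theorem elimAlong_dotProduct (u x v y : σ → 𝕜) :
    elimAlong u x v ⬝ᵥ y = v ⬝ᵥ elimAlong x u y := by
  simp only [elimAlong_apply, sub_dotProduct, dotProduct_sub, smul_dotProduct, dotProduct_smul,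
    smul_eq_mul, dotProduct_comm u]
  ring

end CommRing

theorem eq_smul_of_elimAlong_eq_zero [Field 𝕜] {u x v : σ → 𝕜} (hu : u ⬝ᵥ x ≠ 0)
    (hv : elimAlong u x v = 0) : v = ((v ⬝ᵥ x) / (u ⬝ᵥ x)) • u := by
  rw [elimAlong_apply, sub_eq_zero] at hv
  rw [div_eq_inv_mul, mul_smul, hv, smul_smul, inv_mul_cancel₀ hu, one_smul]

variable [Field 𝕜] [LinearOrder 𝕜] [IsStrictOrderedRing 𝕜]

theorem not_isConicCombination_elimAlong {m : ℕ} {a : Fin (m + 1) → σ → 𝕜} {b x : σ → 𝕜}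
    (hb : ¬ IsConicCombination a b) (hx : ∀ i, 0 ≤ Fin.init a i ⬝ᵥ x) (hbx : b ⬝ᵥ x < 0)
    (hux : a (Fin.last m) ⬝ᵥ x < 0) :
    ¬ IsConicCombination (elimAlong (a (Fin.last m)) x ∘ Fin.init a)
      (elimAlong (a (Fin.last m)) x b) := by
  rintro ⟨l, hl, hlb⟩
  set w := ∑ i, l i • Fin.init a i
  have hwx : 0 ≤ w ⬝ᵥ x := by
    simp only [w, sum_dotProduct, smul_dotProduct, smul_eq_mul]
    exact Finset.sum_nonneg fun i _ => mul_nonneg (hl i) (hx i)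
  have hbw : b - w = ((b - w) ⬝ᵥ x / (a (Fin.last m) ⬝ᵥ x)) • a (Fin.last m) := by
    refine eq_smul_of_elimAlong_eq_zero hux.ne ?_
    simp only [map_sub, map_sum, map_smul, w, ← hlb, Function.comp_apply, sub_self]
  refine hb ?_
  rw [← add_sub_cancel w b, hbw]
  refine IsConicCombination.add_smul_last ⟨l, hl, rfl⟩ ?_
  rw [sub_dotProduct]
  exact div_nonneg_of_nonpos (by linarith) hux.le

theorem exists_separating_of_not_isConicCombination_fin :
    ∀ {m : ℕ} {a : Fin m → σ → 𝕜} {b : σ → 𝕜}, ¬ IsConicCombination a b →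
      ∃ x, (∀ i, 0 ≤ a i ⬝ᵥ x) ∧ b ⬝ᵥ x < 0
  | 0, a, b, hb => by
    have hb0 : b ≠ 0 := by
      rintro rfl
      exact hb ⟨0, le_rfl, by simp⟩
    refine ⟨-b, finZeroElim, ?_⟩
    rw [dotProduct_neg, neg_lt_zero]
    exact (Finset.sum_nonneg fun i _ => mul_self_nonneg (b i)).lt_of_ne
      (Ne.symm (mt dotProduct_self_eq_zero.mp hb0))
  | m + 1, a, b, hb => by
    have hinit : ¬ IsConicCombination (Fin.init a) b := fun h => hb <| by
      simpa using h.add_smul_last le_rfl (μ := 0)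
    obtain ⟨x, hx, hbx⟩ := exists_separating_of_not_isConicCombination_fin hinit
    set u := a (Fin.last m)
    rcases le_or_gt 0 (u ⬝ᵥ x) with hux | hux
    · exact ⟨x, Fin.lastCases hux hx, hbx⟩
    obtain ⟨y, hy, hby⟩ := exists_separating_of_not_isConicCombination_fin
      (not_isConicCombination_elimAlong hb hx hbx hux)
    refine ⟨elimAlong x u y, Fin.lastCases ?_ fun i => ?_, ?_⟩ <;> rw [← elimAlong_dotProduct]
    · exact hby
    · rw [elimAlong_self, zero_dotProduct]
    · exact hy i

theorem exists_separating_of_not_isConicCombination {ι : Type*} [Fintype ι]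
    {a : ι → σ → 𝕜} {b : σ → 𝕜} (hb : ¬ IsConicCombination a b) :
    ∃ x, (∀ i, 0 ≤ a i ⬝ᵥ x) ∧ b ⬝ᵥ x < 0 := by
  let e := Fintype.equivFin ι
  obtain ⟨x, hx, hbx⟩ := exists_separating_of_not_isConicCombination_fin
    (a := a ∘ e.symm) fun h => hb <| by simpa [Function.comp_assoc] using h.comp_equiv e
  exact ⟨x, fun i => by simpa using hx (e i), hbx⟩

end Elimination

section Homogenization

variable {𝕜 ι σ : Type*}

abbrev homogenization [Zero 𝕜] [One 𝕜] (C : Matrix ι σ 𝕜) (d : ι → 𝕜) :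
    Matrix (ι ⊕ Unit) (σ ⊕ Unit) 𝕜 :=
  fromBlocks C (replicateCol Unit d) 0 1

section CommSemiring

variable [CommSemiring 𝕜] {C : Matrix ι σ 𝕜} {d : ι → 𝕜}

theorem homogenization_mulVec [Fintype σ] (x : σ → 𝕜) (t : 𝕜) :
    homogenization C d *ᵥ Sum.elim x (fun _ => t) = Sum.elim (C *ᵥ x + t • d) fun _ => t := by
  ext (i | i) <;> simp [mulVec, dotProduct, replicateCol, mul_comm]

theorem vecMul_homogenization [Fintype ι] (l : ι → 𝕜) (l₀ : 𝕜) :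
    Sum.elim l (fun _ => l₀) ᵥ* homogenization C d = Sum.elim (l ᵥ* C) fun _ => l ⬝ᵥ d + l₀ := by
  ext (i | i) <;> simp [vecMul, dotProduct, replicateCol]

theorem IsConicCombination.exists_of_homogenization [PartialOrder 𝕜] [Fintype ι]
    {c : σ → 𝕜} {c₀ : 𝕜} (h : IsConicCombination (homogenization C d) (Sum.elim c fun _ => c₀)) :
    ∃ (l₀ : 𝕜) (l : ι → 𝕜), 0 ≤ l₀ ∧ 0 ≤ l ∧ c = l ᵥ* C ∧ c₀ = l₀ + l ⬝ᵥ d := by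
  obtain ⟨L, hL, hLc⟩ := h
  obtain ⟨l, l₀, rfl⟩ : ∃ l l₀, L = Sum.elim l fun _ => l₀ :=
    ⟨L ∘ Sum.inl, L (Sum.inr ()), by ext (i | i) <;> rfl⟩
  rw [← vecMul_eq_sum, vecMul_homogenization] at hLc
  rw [← Sum.elim_zero_zero, Sum.elim_le_elim_iff] at hL
  refine ⟨l₀, l, hL.2 (), hL.1, funext fun j => ?_, ?_⟩
  · exact (congrFun hLc (Sum.inl j)).symm
  · rw [add_comm]
    exact (congrFun hLc (Sum.inr ())).symm

end CommSemiring

variable [Field 𝕜] [LinearOrder 𝕜] [IsStrictOrderedRing 𝕜] [Fintype σ]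
  {C : Matrix ι σ 𝕜} {d : ι → 𝕜} {c : σ → 𝕜} {c₀ : 𝕜}

theorem exists_neg_of_recession {x₀ x : σ → 𝕜} (hx₀ : 0 ≤ C *ᵥ x₀ + d) (hx : 0 ≤ C *ᵥ x)
    (hcx : c ⬝ᵥ x < 0) : ∃ y, 0 ≤ C *ᵥ y + d ∧ c ⬝ᵥ y + c₀ < 0 := by
  set s := (|c ⬝ᵥ x₀ + c₀| + 1) / -(c ⬝ᵥ x)
  have hs : 0 ≤ s := div_nonneg (by positivity) (by linarith)
  refine ⟨x₀ + s • x, ?_, ?_⟩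
  · rw [mulVec_add, mulVec_smul, add_right_comm]
    exact add_nonneg hx₀ (smul_nonneg hs hx)
  · have hsx : s * (c ⬝ᵥ x) = -(|c ⬝ᵥ x₀ + c₀| + 1) := by
      rw [div_mul_eq_mul_div, div_neg, mul_div_assoc, div_self hcx.ne, mul_one]
    rw [dotProduct_add, dotProduct_smul, smul_eq_mul, hsx]
    linarith [le_abs_self (c ⬝ᵥ x₀ + c₀)]

theorem exists_neg_of_homogeneous (hne : ∃ x₀, 0 ≤ C *ᵥ x₀ + d) {x : σ → 𝕜} {t : 𝕜}
    (hx : 0 ≤ C *ᵥ x + t • d) (ht : 0 ≤ t) (hcx : c ⬝ᵥ x + t * c₀ < 0) :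
    ∃ y, 0 ≤ C *ᵥ y + d ∧ c ⬝ᵥ y + c₀ < 0 := by
  rcases ht.eq_or_lt with rfl | ht
  · obtain ⟨x₀, hx₀⟩ := hne
    simp only [zero_smul, add_zero, zero_mul] at hx hcx
    exact exists_neg_of_recession hx₀ hx hcx
  · refine ⟨t⁻¹ • x, ?_, ?_⟩
    · rw [mulVec_smul, ← inv_smul_smul₀ ht.ne' d, ← smul_add]
      exact smul_nonneg (inv_nonneg.mpr ht.le) hx
    · rw [dotProduct_smul, smul_eq_mul, ← inv_mul_cancel_left₀ ht.ne' c₀, ← mul_add]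
      exact mul_neg_of_pos_of_neg (inv_pos.mpr ht) hcx

theorem isConicCombination_homogenization [Fintype ι] (hne : ∃ x₀, 0 ≤ C *ᵥ x₀ + d)
    (hf : ∀ x, 0 ≤ C *ᵥ x + d → 0 ≤ c ⬝ᵥ x + c₀) :
    IsConicCombination (homogenization C d) (Sum.elim c fun _ => c₀) := by
  by_contra h
  obtain ⟨z, hz, hcz⟩ := exists_separating_of_not_isConicCombination h
  obtain ⟨x, t, rfl⟩ : ∃ x t, z = Sum.elim x fun _ => t :=
    ⟨z ∘ Sum.inl, z (Sum.inr ()), by ext (i | i) <;> rfl⟩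
  have hxt : 0 ≤ homogenization C d *ᵥ Sum.elim x fun _ => t := hz
  rw [homogenization_mulVec, ← Sum.elim_zero_zero, Sum.elim_le_elim_iff] at hxt
  have hcxt : c ⬝ᵥ x + t * c₀ < 0 := by simpa [dotProduct_block, mul_comm] using hcz
  obtain ⟨y, hy, hcy⟩ := exists_neg_of_homogeneous hne hxt.1 (hxt.2 ()) hcxt
  exact (hf y hy).not_gt hcy

end Homogenization

/-- Affine form of Farkas' lemma: an affine function `x ↦ cᵀx + c₀` is nonnegative
on a nonempty polyhedron `{x : Cx + d ≥ 0}` iff it is a positive affine combination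
of the constraints: `c = λᵀC` and `c₀ = λ₀ + λᵀd` for some `λ₀ ≥ 0`, `λ ≥ 0`. -/
theorem stmt_10 {m n : ℕ} (C : Matrix (Fin m) (Fin n) ℚ) (d : Fin m → ℚ)
    (hne : ∃ x : Fin n → ℚ, 0 ≤ C *ᵥ x + d)
    (c : Fin n → ℚ) (c₀ : ℚ) :
    (∀ x : Fin n → ℚ, 0 ≤ C *ᵥ x + d → 0 ≤ c ⬝ᵥ x + c₀) ↔
    ∃ (l₀ : ℚ) (l : Fin m → ℚ), 0 ≤ l₀ ∧ (∀ i, 0 ≤ l i) ∧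
      c = vecMul l C ∧ c₀ = l₀ + l ⬝ᵥ d := by
  constructor
  · intro hf
    exact (isConicCombination_homogenization hne hf).exists_of_homogenization
  · rintro ⟨l₀, l, hl₀, hl, rfl, rfl⟩ x hx
    have hlx : 0 ≤ l ⬝ᵥ (C *ᵥ x + d) := dotProduct_nonneg_of_nonneg (fun i => hl i) hx
    rw [dotProduct_add, dotProduct_mulVec] at hlx
    linarith
end

section
/- (Completeness direction of PR via Farkas) Let A x + A' x' ≤ b define a nonempty polyhedron in ℚ^{2n}, and suppose f(x) = μᵀx + μ₀ is an affine function such that for all (x, x') in the polyhedron, f(x) ≥ 0 and f(x) − f(x') ≥ 1. Then there exist nonnegative vectors λ₁, λ₂ satisfying λ₁ᵀA' = 0, (λ₁ᵀ − λ₂ᵀ)A = 0, λ₂ᵀ(A+A') = 0 and λ₂ᵀb < 0, with moreover λ₂ᵀA' = h μᵀ for some h > 0 and λ₁ᵀb related to μ₀. (The affine form of Farkas' lemma may be assumed.) -/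
/-!
Farkas' lemma for a cone generated by finitely many vectors is proved by induction on the
number of generators, in the manner of Fourier–Motzkin elimination: if the functional `u` that
separates `b` from the cone of the other generators is negative on the new generator `w`,
project everything along `w` onto `ker u` and separate again in the projected picture.
The affine form follows by homogenization, and the theorem applies it twice: to `f x ≥ 0`,
which gives `λ₁`, and to `f x - f x' ≥ 1`, which gives `λ₂` with `h = 1`.
-/

open Matrix PointedCone

section Projection

variable {𝕜 α : Type*} [Field 𝕜] [Fintype α]

def projAlong (u w : α → 𝕜) : (α → 𝕜) →ₗ[𝕜] α → 𝕜 where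
  toFun z := z - (u ⬝ᵥ z / u ⬝ᵥ w) • w
  map_add' _ _ := by simp only [dotProduct_add, add_div, add_smul]; abel
  map_smul' _ _ := by
    simp only [dotProduct_smul, smul_eq_mul, mul_div_assoc, smul_sub, smul_smul,
      RingHom.id_apply]

lemma projAlong_apply (u w z : α → 𝕜) : projAlong u w z = z - (u ⬝ᵥ z / u ⬝ᵥ w) • w := rfl

lemma dotProduct_projAlong (u u' w z : α → 𝕜) :
    u' ⬝ᵥ projAlong u w z = (u' - (u' ⬝ᵥ w / u ⬝ᵥ w) • u) ⬝ᵥ z := by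
  simp only [projAlong_apply, dotProduct_sub, sub_dotProduct, dotProduct_smul, smul_dotProduct,
    smul_eq_mul]
  ring

lemma projAlong_self {u w : α → 𝕜} (h : u ⬝ᵥ w ≠ 0) : projAlong u w w = 0 := by
  simp [projAlong_apply, div_self h]

end Projection

section Farkas

variable {𝕜 : Type*} [Field 𝕜] [LinearOrder 𝕜] [IsStrictOrderedRing 𝕜]

lemma mem_hull_range_iff {ι E : Type*} [Fintype ι] [AddCommGroup E] [Module 𝕜 E]
    {v : ι → E} {x : E} :
    x ∈ hull 𝕜 (Set.range v) ↔ ∃ y : ι → 𝕜, 0 ≤ y ∧ ∑ i, y i • v i = x := by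
  rw [Submodule.mem_span_range_iff_exists_fun]
  constructor
  · rintro ⟨c, rfl⟩
    exact ⟨fun i => c i, fun i => (c i).2, rfl⟩
  · rintro ⟨y, hy, rfl⟩
    exact ⟨fun i => ⟨y i, hy i⟩, rfl⟩

variable {α : Type*} [Fintype α]

lemma dotProduct_nonneg_of_mem_hull {s : Set (α → 𝕜)} {u y : α → 𝕜}
    (hu : ∀ v ∈ s, 0 ≤ u ⬝ᵥ v) (hy : y ∈ hull 𝕜 s) : 0 ≤ u ⬝ᵥ y := by
  have : u ∈ dual (dotProductBilin 𝕜 𝕜) (hull 𝕜 s) := by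
    rw [dual_hull]
    intro v hv
    simpa [dotProduct_comm] using hu v hv
  simpa [dotProduct_comm] using this hy

lemma mem_hull_insert_of_projAlong_mem_hull {s : Set (α → 𝕜)} {u w b : α → 𝕜}
    (hu : ∀ v ∈ s, 0 ≤ u ⬝ᵥ v) (hub : u ⬝ᵥ b < 0) (huw : u ⬝ᵥ w < 0)
    (h : projAlong u w b ∈ hull 𝕜 (projAlong u w '' s)) : b ∈ hull 𝕜 (insert w s) := by
  obtain ⟨y, hy, hpy⟩ : projAlong u w b ∈ (hull 𝕜 s).map (projAlong u w) := by
    rwa [PointedCone.map, Submodule.map_span]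
  have hby : b - y = (u ⬝ᵥ (b - y) / u ⬝ᵥ w) • w := by
    rw [← sub_eq_zero, ← projAlong_apply, map_sub, ← hpy]
    exact sub_self _
  have ht : 0 ≤ u ⬝ᵥ (b - y) / u ⬝ᵥ w := by
    have := dotProduct_nonneg_of_mem_hull hu hy
    exact div_nonneg_of_nonpos (by rw [dotProduct_sub]; linarith) huw.le
  exact Submodule.mem_span_insert.2
    ⟨⟨_, ht⟩, y, hy, by rw [Nonneg.mk_smul, ← hby, sub_add_cancel]⟩

theorem exists_dotProduct_neg_of_notMem_hull (s : Finset (α → 𝕜)) {b : α → 𝕜}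
    (hb : b ∉ hull 𝕜 (s : Set (α → 𝕜))) : ∃ u, (∀ v ∈ s, 0 ≤ u ⬝ᵥ v) ∧ u ⬝ᵥ b < 0 := by
  classical
  induction hcard : s.card using Nat.strong_induction_on generalizing s b with
  | _ n ih =>
  rcases s.eq_empty_or_nonempty with rfl | ⟨w, hw⟩
  · have hb0 : b ≠ 0 := by rintro rfl; exact hb (zero_mem _)
    have hbb : 0 < b ⬝ᵥ b := (Finset.sum_nonneg fun i _ => mul_self_nonneg (b i)).lt_of_ne'
      (dotProduct_self_eq_zero.not.2 hb0)
    exact ⟨-b, by simp, by rwa [neg_dotProduct, neg_lt_zero]⟩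
  set t := s.erase w
  have hs : s = insert w t := (Finset.insert_erase hw).symm
  have htcard : t.card < n := hcard ▸ Finset.card_erase_lt_of_mem hw
  have hbt : b ∉ hull 𝕜 (t : Set (α → 𝕜)) :=
    fun h => hb (Submodule.span_mono (Finset.coe_subset.2 (s.erase_subset w)) h)
  obtain ⟨u, hu, hub⟩ := ih _ htcard t hbt rfl
  rcases le_or_gt 0 (u ⬝ᵥ w) with huw | huw
  · exact ⟨u, by rw [hs, Finset.forall_mem_insert]; exact ⟨huw, hu⟩, hub⟩
  have hpb : projAlong u w b ∉ hull 𝕜 ((t.image (projAlong u w) : Finset _) : Set (α → 𝕜)) := by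
    intro h
    rw [Finset.coe_image] at h
    exact hb (by simpa [hs] using mem_hull_insert_of_projAlong_mem_hull hu hub huw h)
  obtain ⟨u', hu', hub'⟩ := ih _ (Finset.card_image_le.trans_lt htcard) _ hpb rfl
  refine ⟨u' - (u' ⬝ᵥ w / u ⬝ᵥ w) • u, ?_, by rwa [← dotProduct_projAlong]⟩
  simp_rw [hs, Finset.forall_mem_insert, ← dotProduct_projAlong, projAlong_self huw.ne,
    dotProduct_zero]
  exact ⟨le_rfl, fun v hv => hu' _ (Finset.mem_image_of_mem _ hv)⟩

lemma dotProduct_add_mul_nonneg_of_forall_dotProduct_le {ι κ : Type*} [Fintype κ]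
    (M : Matrix ι κ 𝕜) (b : ι → 𝕜) (hne : ∃ x, M *ᵥ x ≤ b) (c : κ → 𝕜) (δ : 𝕜)
    (h : ∀ x, M *ᵥ x ≤ b → c ⬝ᵥ x ≤ δ) {z : κ → 𝕜} {τ : 𝕜} (hτ : 0 ≤ τ)
    (hz : ∀ i, 0 ≤ z ⬝ᵥ M i + τ * b i) :
    0 ≤ z ⬝ᵥ c + τ * δ := by
  obtain ⟨x₀, hx₀⟩ := hne
  by_contra! hneg
  -- `(1 + t τ)⁻¹ • (x₀ - t • z)` is feasible for every `t ≥ 0`; this `t` makes it violate `h`.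
  set t := (|c ⬝ᵥ x₀ - δ| + 1) / -(z ⬝ᵥ c + τ * δ)
  have ht : 0 ≤ t := div_nonneg (by positivity) (by linarith)
  have hs : 0 < 1 + t * τ := by positivity
  have hfeas : M *ᵥ ((1 + t * τ)⁻¹ • (x₀ - t • z)) ≤ b := by
    intro i
    have hMz : (M *ᵥ z) i = z ⬝ᵥ M i := dotProduct_comm _ _
    rw [mulVec_smul, mulVec_sub, mulVec_smul, Pi.smul_apply, Pi.sub_apply, Pi.smul_apply,
      smul_eq_mul, smul_eq_mul, inv_mul_le_iff₀ hs, hMz]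
    nlinarith [mul_nonneg ht (hz i), hx₀ i]
  have hval := h _ hfeas
  rw [dotProduct_smul, dotProduct_sub, dotProduct_smul, smul_eq_mul, smul_eq_mul,
    inv_mul_le_iff₀ hs, dotProduct_comm c z] at hval
  have htε : t * -(z ⬝ᵥ c + τ * δ) = |c ⬝ᵥ x₀ - δ| + 1 := div_mul_cancel₀ _ (by linarith)
  have : c ⬝ᵥ x₀ - δ ≤ -(|c ⬝ᵥ x₀ - δ| + 1) := by rw [← htε]; linear_combination hval
  linarith [neg_abs_le (c ⬝ᵥ x₀ - δ)]

theorem exists_nonneg_vecMul_eq_of_forall_dotProduct_le {ι κ : Type*} [Fintype ι] [Fintype κ]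
    (M : Matrix ι κ 𝕜) (b : ι → 𝕜) (hne : ∃ x, M *ᵥ x ≤ b) (c : κ → 𝕜) (δ : 𝕜)
    (h : ∀ x, M *ᵥ x ≤ b → c ⬝ᵥ x ≤ δ) :
    ∃ y, 0 ≤ y ∧ y ᵥ* M = c ∧ y ⬝ᵥ b ≤ δ := by
  classical
  let gen : Option ι → κ ⊕ Unit → 𝕜 := fun o =>
    o.elim (Sum.elim 0 1) fun i => Sum.elim (M i) fun _ => b i
  by_cases hmem : Sum.elim c (fun _ => δ) ∈ hull 𝕜 (Set.range gen)
  · obtain ⟨y, hy, hsum⟩ := mem_hull_range_iff.1 hmem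
    refine ⟨fun i => y (some i), fun i => hy _, ?_, ?_⟩
    · ext j
      simpa [gen, Fintype.sum_option, vecMul, dotProduct] using congrFun hsum (Sum.inl j)
    · have := congrFun hsum (Sum.inr ())
      simp only [gen, Finset.sum_apply, Fintype.sum_option, Pi.smul_apply, Option.elim_none,
        Option.elim_some, Sum.elim_inr, Pi.one_apply, smul_eq_mul, mul_one] at this
      rw [dotProduct]
      linarith [show (0 : 𝕜) ≤ y none from hy none]
  · obtain ⟨u, hu, huc⟩ := exists_dotProduct_neg_of_notMem_hull (Finset.univ.image gen)
      (by simpa using hmem)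
    have hgen : ∀ o, 0 ≤ u ⬝ᵥ gen o :=
      fun o => hu _ (Finset.mem_image_of_mem _ (Finset.mem_univ o))
    obtain ⟨z, τ, rfl⟩ : ∃ z τ, u = Sum.elim z fun _ => τ :=
      ⟨u ∘ Sum.inl, u (Sum.inr ()), by ext (j | _) <;> rfl⟩
    have hτ : 0 ≤ τ := by simpa [gen] using hgen none
    have hrows : ∀ i, 0 ≤ z ⬝ᵥ M i + τ * b i := fun i => by simpa [gen] using hgen (some i)
    rw [sumElim_dotProduct_sumElim] at huc
    exact absurd (dotProduct_add_mul_nonneg_of_forall_dotProduct_le M b hne c δ h hτ hrows)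
      (not_le.2 (by simpa using huc))

theorem exists_nonneg_vecMul_eq_of_forall_dotProduct_add_le {ι κ κ' : Type*} [Fintype ι]
    [Fintype κ] [Fintype κ'] (A : Matrix ι κ 𝕜) (A' : Matrix ι κ' 𝕜) (b : ι → 𝕜)
    (hne : ∃ x x', A *ᵥ x + A' *ᵥ x' ≤ b) (c : κ → 𝕜) (c' : κ' → 𝕜) (δ : 𝕜)
    (h : ∀ x x', A *ᵥ x + A' *ᵥ x' ≤ b → c ⬝ᵥ x + c' ⬝ᵥ x' ≤ δ) :
    ∃ y, 0 ≤ y ∧ y ᵥ* A = c ∧ y ᵥ* A' = c' ∧ y ⬝ᵥ b ≤ δ := by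
  have hne' : ∃ z, fromCols A A' *ᵥ z ≤ b := by
    obtain ⟨x, x', hx⟩ := hne
    exact ⟨Sum.elim x x', by rwa [fromCols_mulVec_sumElim]⟩
  have h' : ∀ z, fromCols A A' *ᵥ z ≤ b → Sum.elim c c' ⬝ᵥ z ≤ δ := fun z hz => by
    rw [← Sum.elim_comp_inl_inr z, fromCols_mulVec_sumElim] at hz
    rw [← Sum.elim_comp_inl_inr z, sumElim_dotProduct_sumElim]
    exact h _ _ hz
  obtain ⟨y, hy, hyA, hyb⟩ :=
    exists_nonneg_vecMul_eq_of_forall_dotProduct_le (fromCols A A') b hne' (Sum.elim c c') δ h'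
  rw [vecMul_fromCols, Sum.elim_eq_iff] at hyA
  exact ⟨y, hy, hyA.1, hyA.2, hyb⟩

end Farkas

/-- Completeness direction of the Podelski–Rybalchenko method via Farkas' lemma:
if the polyhedron `A x + A' x' ≤ b` is nonempty and `f x = μᵀx + μ₀` is an affine
function with `f x ≥ 0` and `f x − f x' ≥ 1` on the polyhedron, then there exist
nonnegative `λ₁, λ₂` satisfying the PR conditions, with `λ₂ᵀA' = h μᵀ` for some
`h > 0` and `λ₁ᵀb ≤ h μ₀`. -/
theorem stmt_13 {m n : ℕ} (A A' : Matrix (Fin m) (Fin n) ℚ) (b : Fin m → ℚ)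
    (hne : ∃ x x' : Fin n → ℚ, A *ᵥ x + A' *ᵥ x' ≤ b)
    (μ : Fin n → ℚ) (μ₀ : ℚ)
    (hrank : ∀ x x' : Fin n → ℚ, A *ᵥ x + A' *ᵥ x' ≤ b →
      0 ≤ μ ⬝ᵥ x + μ₀ ∧ (μ ⬝ᵥ x) - (μ ⬝ᵥ x') ≥ 1) :
    ∃ l₁ l₂ : Fin m → ℚ, (∀ i, 0 ≤ l₁ i) ∧ (∀ i, 0 ≤ l₂ i) ∧
      vecMul l₁ A' = 0 ∧ vecMul (l₁ - l₂) A = 0 ∧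
      vecMul l₂ (A + A') = 0 ∧ l₂ ⬝ᵥ b < 0 ∧
      ∃ h : ℚ, 0 < h ∧ vecMul l₂ A' = h • μ ∧ l₁ ⬝ᵥ b ≤ h * μ₀ := by
  obtain ⟨l₁, hl₁, hl₁A, hl₁A', hl₁b⟩ :=
    exists_nonneg_vecMul_eq_of_forall_dotProduct_add_le A A' b hne (-μ) 0 μ₀ fun x x' hx => by
      have := (hrank x x' hx).1
      rw [neg_dotProduct, zero_dotProduct]
      linarith
  obtain ⟨l₂, hl₂, hl₂A, hl₂A', hl₂b⟩ :=
    exists_nonneg_vecMul_eq_of_forall_dotProduct_add_le A A' b hne (-μ) μ (-1) fun x x' hx => by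
      have := (hrank x x' hx).2
      rw [neg_dotProduct]
      linarith
  refine ⟨l₁, l₂, hl₁, hl₂, hl₁A', ?_, ?_, by linarith, 1, one_pos, ?_, ?_⟩
  · rw [sub_vecMul, hl₁A, hl₂A, sub_self]
  · rw [vecMul_add, hl₂A, hl₂A', neg_add_cancel]
  · rw [hl₂A', one_smul]
  · rwa [one_mul]
end
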